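/- Let q : X → Y be a simplicial fibration of simplicial sets with a cleavage C that is flat over a subset S ⊆ X_0. If w ∈ C_n satisfies: the initial vertex s_0(w) lies in S, the initial faces s_k(w) lie in C_k for all 0 < k < n, and d_i(w) ∈ C_{n-1} for all i ≠ i_0 where 0 < i_0 < n, then also d_{i_0}(w) ∈ C_{n-1}. -/

import Mathlib

open CategoryTheory Simplicial SSet Opposite

/-- Restriction of a simplex (as a map from the standard simplex) along `α : [k] → [n]`. -/
def restr {X : SSet} {k n : ℕ} (α : SimplexCategory.mk k ⟶ SimplexCategory.mk n)
    (x : Δ[n] ⟶ X) : Δ[k] ⟶ X :=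
  SSet.stdSimplex.map α ≫ x

/-- The initial inclusion `σ_k : [k] → [n]`. -/
def initialIncl (k n : ℕ) (h : k ≤ n) : SimplexCategory.mk k ⟶ SimplexCategory.mk n :=
  SimplexCategory.mkHom
    ⟨fun i => ⟨(i : ℕ), by have := i.isLt; omega⟩,
     fun a b hab => by simp only [Fin.le_def] at hab ⊢; omega⟩

/-- `q : X ⟶ Y` is a simplicial fibration: every relative horn-lifting problem has a solution. -/
def IsFibration {X Y : SSet} (q : X ⟶ Y) : Prop :=
  ∀ (n : ℕ) (i : Fin (n + 2)) (h : (Λ[n + 1, i] : SSet) ⟶ X) (y : Δ[n + 1] ⟶ Y),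
    h ≫ q = (Λ[n + 1, i]).ι ≫ y →
      ∃ x : Δ[n + 1] ⟶ X, (Λ[n + 1, i]).ι ≫ x = h ∧ x ≫ q = y

/-- `C` is a cleavage for `q`: every relative `(n,k)`-horn with `k < n` has a unique filling
in `C`. -/
def IsCleavage {X Y : SSet} (q : X ⟶ Y) (C : ∀ n, Set (Δ[n] ⟶ X)) : Prop :=
  ∀ (n : ℕ) (i : Fin (n + 2)), (i : ℕ) < n + 1 →
    ∀ (h : (Λ[n + 1, i] : SSet) ⟶ X) (y : Δ[n + 1] ⟶ Y),
      h ≫ q = (Λ[n + 1, i]).ι ≫ y →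
        ∃! x : Δ[n + 1] ⟶ X, x ∈ C (n + 1) ∧ (Λ[n + 1, i]).ι ≫ x = h ∧ x ≫ q = y

/-- `C` is flat over `S ⊆ X_0`. -/
def FlatOver {X Y : SSet} (q : X ⟶ Y) (C : ∀ n, Set (Δ[n] ⟶ X)) (S : Set (Δ[0] ⟶ X)) : Prop :=
  ∀ (n : ℕ) (w : Δ[n + 1] ⟶ X), w ∈ C (n + 1) →
    restr (initialIncl 0 (n + 1) (by omega)) w ∈ S →
    (∀ (k : ℕ) (hk : k + 1 ≤ n + 1), restr (initialIncl (k + 1) (n + 1) hk) w ∈ C (k + 1)) →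
    (∀ i : Fin (n + 1), restr (SimplexCategory.δ i.succ) w ∈ C n) →
    restr (SimplexCategory.δ (0 : Fin (n + 2))) w ∈ C n

/-
Replace `d_{i₀} w` by the cleavage filler `u` of its `0`-horn, glue `u` into the `0`-horn of `w`
in place of the face `i₀`, and let `z ∈ C` fill it. Flatness gives `d₀ z ∈ C`. Then `d₀ z` and
`d₀ w` are cleavage fillers of the same `(i₀ - 1)`-horn, so they agree; hence `z` and `w` are
cleavage fillers of the same `i₀`-horn, so `z = w` and `d_{i₀} w = d_{i₀} z = u ∈ C`.
-/
open CategoryTheory Simplicial SSet SimplexCategory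

universe u

section Restriction

variable {X Y : SSet.{u}}

lemma restr_id {n : ℕ} (x : Δ[n] ⟶ X) : restr (𝟙 ⦋n⦌) x = x := by
  rw [restr, CategoryTheory.Functor.map_id SSet.stdSimplex, Category.id_comp]

lemma restr_restr {a b c : ℕ} (α : ⦋a⦌ ⟶ ⦋b⦌) (β : ⦋b⦌ ⟶ ⦋c⦌) (x : Δ[c] ⟶ X) :
    restr α (restr β x) = restr (α ≫ β) x := by
  rw [restr, restr, restr, ← Category.assoc, ← SSet.stdSimplex.map_comp]

lemma restr_comp {a b : ℕ} (α : ⦋a⦌ ⟶ ⦋b⦌) (x : Δ[b] ⟶ X) (q : X ⟶ Y) :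
    restr α x ≫ q = restr α (x ≫ q) := by
  simp [restr]

lemma restr_δ_restr_δ_zero {n : ℕ} (a : Fin (n + 2)) (x : Δ[n + 2] ⟶ X) :
    restr (δ a) (restr (δ 0) x) = restr (δ 0) (restr (δ a.succ) x) := by
  rw [restr_restr, restr_restr, δ_comp_δ (Fin.zero_le a), Fin.castSucc_zero]

lemma restr_δ_pred_restr_δ {n : ℕ} {j k : Fin (n + 3)} (hjk : j < k) (x : Δ[n + 2] ⟶ X) :
    restr (δ (k.pred (Fin.ne_zero_of_lt hjk))) (restr (δ j) x) =
      restr (δ (j.castPred (Fin.ne_last_of_lt hjk))) (restr (δ k) x) := by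
  rw [restr_restr, restr_restr]
  congr 1
  have hle : j.castPred (Fin.ne_last_of_lt hjk) ≤ k.pred (Fin.ne_zero_of_lt hjk) := by
    rw [Fin.le_def, Fin.coe_castPred, Fin.val_pred]
    omega
  simpa only [Fin.succ_pred, Fin.castSucc_castPred] using (δ_comp_δ hle).symm

lemma initialIncl_self (n : ℕ) (h : n ≤ n) : initialIncl n n h = 𝟙 ⦋n⦌ := by
  ext i
  rfl

lemma initialIncl_eq_comp_δ_last {k n : ℕ} (h : k ≤ n) (h' : k ≤ n + 1) :
    initialIncl k (n + 1) h' = initialIncl k n h ≫ δ (Fin.last (n + 1)) := by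
  ext i
  exact congrArg Fin.val (Fin.succAbove_last_apply ((initialIncl k n h).toOrderHom i)).symm

lemma restr_initialIncl_eq_of_restr_δ_last_eq {k n : ℕ} (h : k ≤ n) (h' : k ≤ n + 1)
    {x y : Δ[n + 1] ⟶ X}
    (hxy : restr (δ (Fin.last (n + 1))) x = restr (δ (Fin.last (n + 1))) y) :
    restr (initialIncl k (n + 1) h') x = restr (initialIncl k (n + 1) h') y := by
  rw [initialIncl_eq_comp_δ_last h, ← restr_restr, hxy, restr_restr]

end Restriction

section Horn

variable {X : SSet.{u}}

lemma horn_ι_ι_comp {n : ℕ} (i j : Fin (n + 2)) (hj : j ≠ i) (x : Δ[n + 1] ⟶ X) :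
    horn.ι i j hj ≫ Λ[n + 1, i].ι ≫ x = restr (δ j) x :=
  horn.ι_ι_assoc i j hj x

lemma horn_ι_comp_eq_iff {n : ℕ} {i : Fin (n + 2)} {x y : Δ[n + 1] ⟶ X} :
    Λ[n + 1, i].ι ≫ x = Λ[n + 1, i].ι ≫ y ↔ ∀ j ≠ i, restr (δ j) x = restr (δ j) y := by
  refine ⟨fun h j hj => ?_, fun h => horn.hom_ext' fun j hj => ?_⟩
  · rw [← horn_ι_ι_comp i j hj, h, horn_ι_ι_comp]
  · rw [horn_ι_ι_comp, horn_ι_ι_comp, h j hj]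

/- Face `c` of `d_{j₀} x` is the face of `x` opposite the vertices `j₀` and `j₀.succAbove c`, so
it is shared with another face of the horn `Λ[n + 2, i]` exactly when `j₀.succAbove c ≠ i`. -/
lemma exists_horn_replace_face {n : ℕ} (x : Δ[n + 2] ⟶ X) (i j₀ : Fin (n + 3))
    (u : Δ[n + 1] ⟶ X)
    (hu : ∀ c, j₀.succAbove c ≠ i → restr (δ c) u = restr (δ c) (restr (δ j₀) x)) :
    ∃ h : (Λ[n + 2, i] : SSet) ⟶ X, ∀ j (hj : j ≠ i),
      horn.ι i j hj ≫ h = if j = j₀ then u else restr (δ j) x := by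
  refine horn.IsCompatible.exists_desc (f := fun j _ => if j = j₀ then u else restr (δ j) x) ?_
  rw [horn.isCompatible_iff]
  intro j k hj hk hjk
  change restr _ (ite _ _ _) = restr _ (ite _ _ _)
  by_cases hj₀ : j = j₀
  · subst hj₀
    rw [if_pos rfl, if_neg hjk.ne', hu _ (by rwa [Fin.succAbove_pred_of_lt _ _ hjk]),
      restr_δ_pred_restr_δ hjk]
  · by_cases hk₀ : k = j₀
    · subst hk₀
      rw [if_neg hj₀, if_pos rfl, hu _ (by rwa [Fin.succAbove_castPred_of_lt _ _ hjk]),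
        restr_δ_pred_restr_δ hjk]
    · rw [if_neg hj₀, if_neg hk₀, restr_δ_pred_restr_δ hjk]

end Horn

namespace IsCleavage

variable {X Y : SSet.{u}} {q : X ⟶ Y} {C : ∀ n, Set (Δ[n] ⟶ X)}

lemma eq_of_restr_δ_eq (hC : IsCleavage q C) {n : ℕ} {i : Fin (n + 2)} (hi : (i : ℕ) < n + 1)
    {x y : Δ[n + 1] ⟶ X} (hx : x ∈ C (n + 1)) (hy : y ∈ C (n + 1)) (hxy_q : x ≫ q = y ≫ q)
    (hxy : ∀ j ≠ i, restr (δ j) x = restr (δ j) y) : x = y := by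
  obtain ⟨v, -, hv⟩ := hC n i hi (Λ[n + 1, i].ι ≫ x) (x ≫ q) (Category.assoc _ _ _)
  exact (hv x ⟨hx, rfl, rfl⟩).trans (hv y ⟨hy, (horn_ι_comp_eq_iff.2 hxy).symm, hxy_q.symm⟩).symm

lemma exists_mem_restr_δ_eq (hC : IsCleavage q C) {n : ℕ} {i : Fin (n + 2)}
    (hi : (i : ℕ) < n + 1) (x : Δ[n + 1] ⟶ X) :
    ∃ u ∈ C (n + 1), (∀ j ≠ i, restr (δ j) u = restr (δ j) x) ∧ u ≫ q = x ≫ q := by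
  obtain ⟨u, ⟨huC, hu, huq⟩, -⟩ := hC n i hi (Λ[n + 1, i].ι ≫ x) (x ≫ q) (Category.assoc _ _ _)
  exact ⟨u, huC, horn_ι_comp_eq_iff.1 hu, huq⟩

lemma exists_mem_replace_face (hC : IsCleavage q C) {n : ℕ} (x : Δ[n + 2] ⟶ X)
    {i j₀ : Fin (n + 3)} (hi : (i : ℕ) < n + 2) (hj₀ : j₀ ≠ i) (u : Δ[n + 1] ⟶ X)
    (hu : ∀ c, j₀.succAbove c ≠ i → restr (δ c) u = restr (δ c) (restr (δ j₀) x))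
    (huq : u ≫ q = restr (δ j₀) x ≫ q) :
    ∃ z ∈ C (n + 2), restr (δ j₀) z = u ∧
      (∀ j ≠ i, j ≠ j₀ → restr (δ j) z = restr (δ j) x) ∧
      z ≫ q = x ≫ q := by
  obtain ⟨h, hh⟩ := exists_horn_replace_face x i j₀ u hu
  have hhq : h ≫ q = Λ[n + 2, i].ι ≫ x ≫ q := horn.hom_ext' fun j hj => by
    rw [← Category.assoc, hh, horn_ι_ι_comp, ← restr_comp]
    split_ifs with hj₀
    · rw [huq, hj₀]
    · rfl
  obtain ⟨z, ⟨hzC, hz, hzq⟩, -⟩ := hC (n + 1) i hi h (x ≫ q) hhq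
  have hfaces (j) (hj : j ≠ i) : restr (δ j) z = if j = j₀ then u else restr (δ j) x := by
    rw [← hh j hj, ← hz, horn_ι_ι_comp]
  refine ⟨z, hzC, by simpa using hfaces j₀ hj₀, fun j hj hj' => ?_, hzq⟩
  simpa [hj'] using hfaces j hj

lemma restr_δ_zero_eq_of_restr_δ_eq (hC : IsCleavage q C) {n : ℕ} {i : Fin (n + 2)}
    (hi : (i : ℕ) < n + 1) {z w : Δ[n + 2] ⟶ X}
    (hz : restr (δ 0) z ∈ C (n + 1)) (hw : restr (δ 0) w ∈ C (n + 1))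
    (hzw_q : z ≫ q = w ≫ q)
    (hzw : ∀ j ≠ 0, j ≠ i.succ → restr (δ j) z = restr (δ j) w) :
    restr (δ 0) z = restr (δ 0) w := by
  refine hC.eq_of_restr_δ_eq hi hz hw (by rw [restr_comp, restr_comp, hzw_q]) fun a ha => ?_
  rw [restr_δ_restr_δ_zero, restr_δ_restr_δ_zero,
    hzw a.succ (Fin.succ_ne_zero a) ((Fin.succ_injective _).ne ha)]

end IsCleavage

lemma FlatOver.restr_δ_zero_mem_of_restr_δ_last_eq {X Y : SSet.{u}} {q : X ⟶ Y}
    {C : ∀ n, Set (Δ[n] ⟶ X)} {S : Set (Δ[0] ⟶ X)} (hflat : FlatOver q C S) {n : ℕ}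
    {z w : Δ[n + 2] ⟶ X} (hz : z ∈ C (n + 2))
    (hlast : restr (δ (Fin.last (n + 2))) z = restr (δ (Fin.last (n + 2))) w)
    (h0 : restr (initialIncl 0 (n + 2) (by omega)) w ∈ S)
    (hsk : ∀ (k : ℕ) (hk : k + 1 ≤ n + 1),
      restr (initialIncl (k + 1) (n + 2) (by omega)) w ∈ C (k + 1))
    (hfaces : ∀ j : Fin (n + 2), restr (δ j.succ) z ∈ C (n + 1)) :
    restr (δ 0) z ∈ C (n + 1) := by
  refine hflat (n + 1) z hz ?_ (fun k hk => ?_) hfaces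
  · rwa [restr_initialIncl_eq_of_restr_δ_last_eq (Nat.zero_le _) _ hlast]
  · rcases (by omega : k + 1 ≤ n + 1 ∨ k = n + 1) with hk | rfl
    · rw [restr_initialIncl_eq_of_restr_δ_last_eq hk _ hlast]
      exact hsk k hk
    · rwa [initialIncl_self, restr_id]

/-- if the cleavage `C` is flat over `S`, `w ∈ C_n` has initial vertex in `S`,
initial faces in `C`, and all faces but `d_{i_0}` (with `0 < i_0 < n`) in `C`, then also
`d_{i_0} w ∈ C`. -/
theorem stmt6 {X Y : SSet} (q : X ⟶ Y) (C : ∀ n, Set (Δ[n] ⟶ X)) (S : Set (Δ[0] ⟶ X))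
    (hC : IsCleavage q C) (hflat : FlatOver q C S)
    (n : ℕ) (w : Δ[n + 1] ⟶ X) (hw : w ∈ C (n + 1))
    (h0 : restr (initialIncl 0 (n + 1) (by omega)) w ∈ S)
    (hsk : ∀ (k : ℕ) (hk0 : 0 < k) (hk : k < n + 1),
      restr (initialIncl k (n + 1) (le_of_lt hk)) w ∈ C k)
    (i0 : ℕ) (hi0 : 0 < i0) (hi0' : i0 < n + 1)
    (hfaces : ∀ i : Fin (n + 2), (i : ℕ) ≠ i0 →
      restr (SimplexCategory.δ i) w ∈ C n) :
    restr (SimplexCategory.δ (⟨i0, by omega⟩ : Fin (n + 2))) w ∈ C n := by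
  obtain ⟨m, rfl⟩ : ∃ m, n = m + 1 := ⟨n - 1, by omega⟩
  set i₀ : Fin (m + 3) := ⟨i0, by omega⟩
  have hi₀ : i₀ ≠ 0 := Fin.pos_iff_ne_zero.mp hi0
  obtain ⟨u, huC, hu, huq⟩ := hC.exists_mem_restr_δ_eq (i := 0) (by simp) (restr (δ i₀) w)
  obtain ⟨z, hzC, hz_i₀, hz, hzq⟩ := hC.exists_mem_replace_face w (i := 0) (by simp) hi₀ u
    (fun c hc => hu c (by rintro rfl; exact hc (Fin.succAbove_ne_zero_zero hi₀))) huq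
  have hz_zero_mem : restr (δ 0) z ∈ C (m + 1) := by
    refine hflat.restr_δ_zero_mem_of_restr_δ_last_eq hzC
      (hz _ Fin.last_pos.ne' (Fin.ne_of_val_ne (show m + 2 ≠ i0 by omega))) h0
      (fun k hk => hsk (k + 1) (by omega) (by omega)) fun j => ?_
    by_cases hj : j.succ = i₀
    · rwa [hj, hz_i₀]
    · rw [hz j.succ (Fin.succ_ne_zero j) hj]
      exact hfaces j.succ fun h => hj (Fin.ext h)
  have hi₀_pred : (⟨i0 - 1, by omega⟩ : Fin (m + 2)).succ = i₀ :=
    Fin.ext (show i0 - 1 + 1 = i0 by omega)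
  have hz_zero : restr (δ 0) z = restr (δ 0) w :=
    hC.restr_δ_zero_eq_of_restr_δ_eq (show i0 - 1 < m + 1 by omega) hz_zero_mem
      (hfaces 0 hi0.ne) hzq (hi₀_pred ▸ hz)
  have hzw : z = w := hC.eq_of_restr_δ_eq (i := i₀) hi0' hzC hw hzq fun j hj => by
    rcases eq_or_ne j 0 with rfl | hj0
    · exact hz_zero
    · exact hz j hj0 hj
  rw [← hzw, hz_i₀]
  exact huC
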